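/- arXiv:1207.3684 — 2 statements merged into one kernel-verified Lean document; each statement's English description precedes it below -/
import Mathlib

section
/- Let R be a commutative ring with 1, let M be an R-module, let n ≥ 1 be an integer, and let k ≥ 1 be an EVEN integer. There is a well-defined R-linear map φ_{n,k} : Sym^n(Sym^k M) → Sym^k(⋀^n M) sending, for any elements a_{ij} ∈ M (1 ≤ i ≤ n, 1 ≤ j ≤ k), the element (a_{11}·⋯·a_{1k})·(a_{21}·⋯·a_{2k})·⋯·(a_{n1}·⋯·a_{nk}) to the sum over all permutations σ₂, …, σ_n ∈ S_k of the product, over i = 1, …, k, of the elements (a_{1i} ∧ a_{2σ₂(i)} ∧ ⋯ ∧ a_{nσ_n(i)}) of ⋀^n M, the outer product being taken in Sym^k(⋀^n M). -/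
open scoped TensorProduct

/-- The submodule of relations defining the symmetric power: differences of pure tensors
related by a permutation of the factors. -/
def symRel (R : Type*) [CommRing R] (n : ℕ) (M : Type*) [AddCommGroup M] [Module R M] :
    Submodule R (⨂[R]^n M) :=
  Submodule.span R {x | ∃ (σ : Equiv.Perm (Fin n)) (v : Fin n → M),
    x = PiTensorProduct.tprod R v - PiTensorProduct.tprod R (v ∘ σ)}

/-- The `n`-th symmetric power of the `R`-module `M`: the quotient of the `n`-fold tensor
power by the permutation action of the symmetric group. -/
def SymPow (R : Type*) [CommRing R] (n : ℕ) (M : Type*) [AddCommGroup M] [Module R M] :=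
  (⨂[R]^n M) ⧸ symRel R n M

noncomputable instance (R : Type*) [CommRing R] (n : ℕ) (M : Type*) [AddCommGroup M] [Module R M] :
    AddCommGroup (SymPow R n M) :=
  inferInstanceAs (AddCommGroup ((⨂[R]^n M) ⧸ symRel R n M))

noncomputable instance (R : Type*) [CommRing R] (n : ℕ) (M : Type*) [AddCommGroup M] [Module R M] :
    Module R (SymPow R n M) :=
  inferInstanceAs (Module R ((⨂[R]^n M) ⧸ symRel R n M))

/-- The canonical quotient map from the tensor power to the symmetric power. -/
noncomputable def SymPow.mk (R : Type*) [CommRing R] (n : ℕ) (M : Type*) [AddCommGroup M] [Module R M] :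
    (⨂[R]^n M) →ₗ[R] SymPow R n M :=
  (symRel R n M).mkQ

/-- The product `v 0 · v 1 · ⋯ · v (n-1)` in the symmetric power `SymPow R n M`. -/
noncomputable def SymPow.prod (R : Type*) [CommRing R] {n : ℕ} {M : Type*} [AddCommGroup M] [Module R M]
    (v : Fin n → M) : SymPow R n M :=
  SymPow.mk R n M (PiTensorProduct.tprod R v)

/-- The wedge `v 0 ∧ v 1 ∧ ⋯ ∧ v (n-1)`, as an element of the `n`-th exterior power
`⋀[R]^n M`. -/
noncomputable def wedgeMk (R : Type*) [CommRing R] {n : ℕ} {M : Type*} [AddCommGroup M] [Module R M]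
    (v : Fin n → M) : ⋀[R]^n M :=
  ⟨ExteriorAlgebra.ιMulti R n v, ExteriorAlgebra.ιMulti_range R n (Set.mem_range_self v)⟩

/-! The right-hand side is a multilinear function `H` of the `n × k` entries `a j i`, and two
invariances of `H` suffice. Permuting the entries of row `j` by `τ` replaces `σ j` by `τ * σ j`;
the normalisation `σ j₀ = 1` is restored by multiplying every `σ j` on the right by one common
permutation, which only permutes the factors of the symmetric product. Permuting the rows by `π`
multiplies each of the `k` wedges by `sign π`, hence the product by `(sign π) ^ k = 1` as `k` is
even, and moves the normalisation to row `π j₀`, but it does not matter which row is normalised.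
The first invariance lets `H` descend through `Sym^k M` in each row, the second through `Sym^n`. -/

namespace SymPow

variable {R : Type*} [CommRing R] {k : ℕ} {M E : Type*} [AddCommGroup M] [Module R M]
  [AddCommGroup E] [Module R E]

variable (R k M) in
noncomputable def tprod : MultilinearMap R (fun _ : Fin k => M) (SymPow R k M) :=
  (SymPow.mk R k M).compMultilinearMap (PiTensorProduct.tprod R)

@[simp] theorem tprod_apply (v : Fin k → M) : tprod R k M v = SymPow.prod R v := rfl

theorem prod_comp_perm (v : Fin k → M) (τ : Equiv.Perm (Fin k)) :
    SymPow.prod R (v ∘ τ) = SymPow.prod R v :=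
  ((Submodule.Quotient.eq (symRel R k M)).2 (Submodule.subset_span ⟨τ, v, rfl⟩)).symm

theorem span_range_prod :
    Submodule.span R (Set.range (SymPow.prod R : (Fin k → M) → SymPow R k M)) = ⊤ := by
  rw [show (SymPow.prod R : (Fin k → M) → SymPow R k M) =
      SymPow.mk R k M ∘ PiTensorProduct.tprod R from rfl,
    Set.range_comp, Submodule.span_image, PiTensorProduct.span_tprod_eq_top, Submodule.map_top]
  exact LinearMap.range_eq_top.2 (Submodule.mkQ_surjective _)

noncomputable def lift (f : MultilinearMap R (fun _ : Fin k => M) E)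
    (hf : ∀ (v : Fin k → M) (τ : Equiv.Perm (Fin k)), f (v ∘ τ) = f v) :
    SymPow R k M →ₗ[R] E :=
  (symRel R k M).liftQ (PiTensorProduct.lift f) <| Submodule.span_le.2 <| by
    rintro _ ⟨τ, v, rfl⟩
    simp [hf]

@[simp] theorem lift_prod (f : MultilinearMap R (fun _ : Fin k => M) E)
    (hf : ∀ (v : Fin k → M) (τ : Equiv.Perm (Fin k)), f (v ∘ τ) = f v) (v : Fin k → M) :
    lift f hf (SymPow.prod R v) = f v :=
  PiTensorProduct.lift.tprod v

end SymPow

namespace MultilinearMap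

variable {R ι T E : Type*} [CommRing R] [AddCommGroup T] [Module R T]
  [AddCommGroup E] [Module R E] (N : Submodule R T) (F : MultilinearMap R (fun _ : ι => T) E)

theorem map_eq_of_forall_sub_mem [Fintype ι] (hF : ∀ t i, t i ∈ N → F t = 0) {v w : ι → T}
    (h : ∀ i, v i - w i ∈ N) : F v = F w := by
  classical
  obtain ⟨d, rfl⟩ : ∃ d, v = w + d := ⟨v - w, by abel⟩
  rw [F.map_add_univ, Finset.sum_eq_single Finset.univ]
  · simp
  · intro s _ hs
    obtain ⟨i, hi⟩ : ∃ i, i ∉ s := by simpa [Finset.eq_univ_iff_forall] using hs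
    exact hF _ i (by simpa [hi] using h i)
  · simp

noncomputable def descend [Fintype ι] (hF : ∀ t i, t i ∈ N → F t = 0) :
    MultilinearMap R (fun _ : ι => T ⧸ N) E :=
  have hF' (t : ι → T) : F (fun i => Function.surjInv N.mkQ_surjective (N.mkQ (t i))) = F t :=
    F.map_eq_of_forall_sub_mem N hF fun _ =>
      (Submodule.Quotient.eq N).1 (Function.surjInv_eq N.mkQ_surjective _)
  { toFun q := F fun i => Function.surjInv N.mkQ_surjective (q i)
    map_update_add' q i x y := by
      obtain ⟨t, rfl⟩ := N.mkQ_surjective.comp_left q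
      obtain ⟨x, rfl⟩ := N.mkQ_surjective x
      obtain ⟨y, rfl⟩ := N.mkQ_surjective y
      simp only [← map_add, ← Function.comp_update, Function.comp_apply, hF']
      exact F.map_update_add t i x y
    map_update_smul' q i c x := by
      obtain ⟨t, rfl⟩ := N.mkQ_surjective.comp_left q
      obtain ⟨x, rfl⟩ := N.mkQ_surjective x
      simp only [← map_smul, ← Function.comp_update, Function.comp_apply, hF']
      exact F.map_update_smul t i c x }

theorem descend_mkQ [Fintype ι] (hF : ∀ t i, t i ∈ N → F t = 0) (t : ι → T) :
    F.descend N hF (fun i => N.mkQ (t i)) = F t :=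
  F.map_eq_of_forall_sub_mem N hF fun _ =>
    (Submodule.Quotient.eq N).1 (Function.surjInv_eq N.mkQ_surjective _)

end MultilinearMap

section LiftRows

variable {R κ M E : Type*} [CommRing R] [AddCommGroup M] [Module R M]
  [AddCommGroup E] [Module R E]

variable (R κ M E) in
/-- Split off row `0` through `Fin (m + 1) × κ ≃ κ ⊕ Fin m × κ`, curry, and lift that row
through the tensor power. -/
noncomputable def liftRows : (m : ℕ) →
    MultilinearMap R (fun _ : Fin m × κ => M) E →ₗ[R]
      MultilinearMap R (fun _ : Fin m => ⨂[R] _ : κ, M) E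
  | 0 =>
    { toFun H := MultilinearMap.constOfIsEmpty R _ (H isEmptyElim)
      map_add' _ _ := rfl
      map_smul' _ _ := rfl }
  | m + 1 =>
    (multilinearCurryLeftEquiv R (fun _ => ⨂[R] _ : κ, M) E).symm.toLinearMap ∘ₗ
      PiTensorProduct.lift.toLinearMap ∘ₗ
      (liftRows m).compMultilinearMapₗ R ∘ₗ
      MultilinearMap.currySumEquiv.toLinearMap ∘ₗ
      (MultilinearMap.domDomCongrLinearEquiv R R M E
        (((finSuccEquiv m).prodCongr (Equiv.refl κ)).trans optionProdEquiv)).toLinearMap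

theorem liftRows_tprod (m : ℕ) (H : MultilinearMap R (fun _ : Fin m × κ => M) E)
    (a : Fin m → κ → M) :
    liftRows R κ M E m H (fun j => PiTensorProduct.tprod R (a j)) = H fun p => a p.1 p.2 := by
  induction m with
  | zero => exact congrArg H (Subsingleton.elim _ _)
  | succ m ih =>
    simp only [liftRows, LinearMap.coe_comp, Function.comp_apply, LinearEquiv.coe_coe,
      multilinearCurryLeftEquiv_symm_apply, LinearMap.uncurryLeft_apply, PiTensorProduct.lift.tprod]
    refine (ih _ (Fin.tail a)).trans (congrArg H (funext fun ⟨j, i⟩ => ?_))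
    cases j using Fin.cases <;> simp [Fin.tail]

end LiftRows

section NestedSymPow

variable {R M E : Type*} [CommRing R] [AddCommGroup M] [Module R M]
  [AddCommGroup E] [Module R E] {n k : ℕ}

theorem liftRows_update_tprod_comp_perm (H : MultilinearMap R (fun _ : Fin n × Fin k => M) E)
    (hH : ∀ (a : Fin n → Fin k → M) (τ : Fin n → Equiv.Perm (Fin k)),
      H (fun p => a p.1 (τ p.1 p.2)) = H fun p => a p.1 p.2)
    (t : Fin n → ⨂[R]^k M) (j : Fin n) (v : Fin k → M) (τ : Equiv.Perm (Fin k)) :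
    liftRows R (Fin k) M E n H (Function.update t j (PiTensorProduct.tprod R (v ∘ τ))) =
      liftRows R (Fin k) M E n H (Function.update t j (PiTensorProduct.tprod R v)) := by
  let P (τ : Equiv.Perm (Fin k)) : (⨂[R]^k M) →ₗ[R] ⨂[R]^k M :=
    PiTensorProduct.lift ((PiTensorProduct.tprod R).domDomCongr τ)
  have hP (τ : Equiv.Perm (Fin k)) (v : Fin k → M) :
      P τ (PiTensorProduct.tprod R v) = PiTensorProduct.tprod R (v ∘ τ) :=
    PiTensorProduct.lift.tprod v
  have hP_one : P 1 = LinearMap.id := PiTensorProduct.ext <| MultilinearMap.ext (hP 1)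
  let τs : Fin n → Equiv.Perm (Fin k) := Pi.mulSingle j τ
  have hperm : (liftRows R (Fin k) M E n H).compLinearMap (fun j => P (τs j)) =
      liftRows R (Fin k) M E n H :=
    MultilinearMap.ext_of_span_eq_top (g := fun _ => PiTensorProduct.tprod R)
      (fun _ => PiTensorProduct.span_tprod_eq_top) fun a => by
        simp only [MultilinearMap.compLinearMap_apply, hP]
        exact (liftRows_tprod n H _).trans ((hH a τs).trans (liftRows_tprod n H a).symm)
  have hupd : (fun i => P (τs i) (Function.update t j (PiTensorProduct.tprod R v) i)) =
      Function.update t j (PiTensorProduct.tprod R (v ∘ τ)) := by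
    funext i
    rcases eq_or_ne i j with rfl | hij
    · simp [τs, hP]
    · simp [τs, hij, hP_one]
  rw [← hupd, ← MultilinearMap.compLinearMap_apply, hperm]

theorem exists_multilinearMap_symPow (H : MultilinearMap R (fun _ : Fin n × Fin k => M) E)
    (hH : ∀ (a : Fin n → Fin k → M) (τ : Fin n → Equiv.Perm (Fin k)),
      H (fun p => a p.1 (τ p.1 p.2)) = H fun p => a p.1 p.2) :
    ∃ G : MultilinearMap R (fun _ : Fin n => SymPow R k M) E,
      ∀ a : Fin n → Fin k → M, G (fun j => SymPow.prod R (a j)) = H fun p => a p.1 p.2 := by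
  set F := liftRows R (Fin k) M E n H
  have hF_zero (t : Fin n → ⨂[R]^k M) (j : Fin n) (ht : t j ∈ symRel R k M) : F t = 0 := by
    suffices symRel R k M ≤ LinearMap.ker (F.toLinearMap t j) by simpa using this ht
    refine Submodule.span_le.2 ?_
    rintro _ ⟨τ, v, rfl⟩
    simp [F, liftRows_update_tprod_comp_perm H hH]
  exact ⟨F.descend _ hF_zero, fun a =>
    (F.descend_mkQ _ hF_zero fun j => PiTensorProduct.tprod R (a j)).trans (liftRows_tprod n H a)⟩

theorem exists_linearMap_symPow_symPow (H : MultilinearMap R (fun _ : Fin n × Fin k => M) E)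
    (hrow : ∀ (a : Fin n → Fin k → M) (τ : Fin n → Equiv.Perm (Fin k)),
      H (fun p => a p.1 (τ p.1 p.2)) = H fun p => a p.1 p.2)
    (hcol : ∀ (a : Fin n → Fin k → M) (π : Equiv.Perm (Fin n)),
      H (fun p => a (π p.1) p.2) = H fun p => a p.1 p.2) :
    ∃ φ : SymPow R n (SymPow R k M) →ₗ[R] E, ∀ a : Fin n → Fin k → M,
      φ (SymPow.prod R fun j => SymPow.prod R (a j)) = H fun p => a p.1 p.2 := by
  obtain ⟨G, hG⟩ := exists_multilinearMap_symPow H hrow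
  have hG_perm (π : Equiv.Perm (Fin n)) : G.domDomCongr π = G :=
    MultilinearMap.ext_of_span_eq_top (g := fun _ => SymPow.prod R)
      (fun _ => SymPow.span_range_prod) fun a => by
        simpa [MultilinearMap.domDomCongr_apply, hG] using hcol a π
  exact ⟨SymPow.lift G fun q π => congr($(hG_perm π) q), fun a =>
    (SymPow.lift_prod _ _ _).trans (hG a)⟩

end NestedSymPow

section WedgeSum

variable {R M : Type*} [CommRing R] [AddCommGroup M] [Module R M] {n k : ℕ}

theorem wedgeMk_comp_perm (v : Fin n → M) (π : Equiv.Perm (Fin n)) :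
    wedgeMk R (v ∘ π) = Equiv.Perm.sign π • wedgeMk R v :=
  (exteriorPower.ιMulti R n).map_perm v π

variable (R) in
noncomputable def wedgeProd (a : Fin n → Fin k → M) (σ : Fin n → Equiv.Perm (Fin k)) :
    SymPow R k (⋀[R]^n M) :=
  SymPow.prod R fun i => wedgeMk R fun j => a j (σ j i)

variable (R) in
noncomputable def wedgeSum (j₀ : Fin n) (a : Fin n → Fin k → M) : SymPow R k (⋀[R]^n M) :=
  ∑ σ ∈ Finset.univ.filter (fun σ : Fin n → Equiv.Perm (Fin k) => σ j₀ = 1),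
    wedgeProd R a σ

theorem wedgeProd_mul_const (a : Fin n → Fin k → M) (σ : Fin n → Equiv.Perm (Fin k))
    (ρ : Equiv.Perm (Fin k)) : wedgeProd R a (σ * fun _ => ρ) = wedgeProd R a σ :=
  SymPow.prod_comp_perm (fun i => wedgeMk R fun j => a j (σ j i)) ρ

theorem wedgeProd_comp_perm (hk : Even k) (a : Fin n → Fin k → M)
    (σ : Fin n → Equiv.Perm (Fin k)) (π : Equiv.Perm (Fin n)) :
    wedgeProd R (a ∘ π) σ = wedgeProd R a (σ ∘ π.symm) := by
  have h (i : Fin k) : wedgeMk R (fun j => (a ∘ π) j (σ j i)) =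
      Equiv.Perm.sign π • wedgeMk R (fun j => a j ((σ ∘ π.symm) j i)) := by
    rw [← wedgeMk_comp_perm]
    simp [Function.comp_def]
  rw [wedgeProd, wedgeProd, funext h]
  rcases Int.units_eq_one_or (Equiv.Perm.sign π) with hπ | hπ
  · simp [hπ]
  · simp only [hπ, Units.neg_smul, one_smul, ← neg_one_smul R (wedgeMk R _)]
    rw [← SymPow.tprod_apply, MultilinearMap.map_smul_univ]
    simp [hk.neg_one_pow]

theorem wedgeSum_mul_left (j₀ : Fin n) (a : Fin n → Fin k → M)
    (τ : Fin n → Equiv.Perm (Fin k)) :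
    ∑ σ ∈ Finset.univ.filter (fun σ : Fin n → Equiv.Perm (Fin k) => σ j₀ = 1),
      wedgeProd R a (τ * σ) = wedgeSum R j₀ a := by
  refine Finset.sum_equiv ((Equiv.mulLeft τ).trans (Equiv.mulRight fun _ => (τ j₀)⁻¹))
    (fun σ => by simp) fun σ _ => (wedgeProd_mul_const a (τ * σ) _).symm

theorem wedgeSum_eq_wedgeSum (j₀ j₁ : Fin n) (a : Fin n → Fin k → M) :
    wedgeSum R j₀ a = wedgeSum R j₁ a := by
  refine Finset.sum_nbij' (fun σ => σ * fun _ => (σ j₁)⁻¹)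
    (fun σ => σ * fun _ => (σ j₀)⁻¹) ?_ ?_ ?_ ?_
    fun σ _ => (wedgeProd_mul_const a σ _).symm
  all_goals
    intro σ hσ
    simp_all [mul_assoc, funext_iff]

theorem wedgeSum_comp_perm (hk : Even k) (j₀ : Fin n) (a : Fin n → Fin k → M)
    (π : Equiv.Perm (Fin n)) : wedgeSum R j₀ (a ∘ π) = wedgeSum R j₀ a :=
  calc wedgeSum R j₀ (a ∘ π)
      = wedgeSum R (π j₀) a :=
        Finset.sum_equiv (Equiv.arrowCongr π (Equiv.refl _)) (by simp)
          fun σ _ => wedgeProd_comp_perm hk a σ π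
    _ = wedgeSum R j₀ a := wedgeSum_eq_wedgeSum _ _ a

variable (R M) in
/-- The summand for `σ` feeds `a j (σ j i)` into slot `j` of the `i`-th wedge. -/
noncomputable def wedgeSumMultilinear (j₀ : Fin n) :
    MultilinearMap R (fun _ : Fin n × Fin k => M) (SymPow R k (⋀[R]^n M)) :=
  ∑ σ ∈ Finset.univ.filter (fun σ : Fin n → Equiv.Perm (Fin k) => σ j₀ = 1),
    ((SymPow.tprod R k _).compMultilinearMap fun _ =>
      (exteriorPower.ιMulti R n).toMultilinearMap).domDomCongr
      ((Equiv.sigmaEquivProd _ _).trans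
        ((Equiv.prodComm _ _).trans (Equiv.prodShear (Equiv.refl _) σ)))

theorem wedgeSumMultilinear_apply (j₀ : Fin n) (a : Fin n → Fin k → M) :
    wedgeSumMultilinear R M j₀ (fun p => a p.1 p.2) = wedgeSum R j₀ a := by
  rw [wedgeSumMultilinear, _root_.sum_apply]
  rfl

end WedgeSum

theorem stmt6_general {R M : Type*} [CommRing R] [AddCommGroup M] [Module R M]
    (n k : ℕ) (hn : 0 < n) (hkeven : Even k) :
    ∃ φ : SymPow R n (SymPow R k M) →ₗ[R] SymPow R k (⋀[R]^n M),
      ∀ a : Fin n → Fin k → M,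
        φ (SymPow.prod R fun i : Fin n => SymPow.prod R (a i)) =
          ∑ σ ∈ Finset.univ.filter
              (fun σ : Fin n → Equiv.Perm (Fin k) => σ ⟨0, hn⟩ = 1),
            SymPow.prod R (fun i : Fin k => wedgeMk R (fun j : Fin n => a j (σ j i))) := by
  obtain ⟨φ, hφ⟩ :=
    exists_linearMap_symPow_symPow (wedgeSumMultilinear R M (k := k) ⟨0, hn⟩)
    (fun a τ => (wedgeSumMultilinear_apply _ fun j i => a j (τ j i)).trans <|
      (wedgeSum_mul_left _ a τ).trans (wedgeSumMultilinear_apply _ a).symm)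
    (fun a π => (wedgeSumMultilinear_apply _ (a ∘ π)).trans <|
      (wedgeSum_comp_perm hkeven _ a π).trans (wedgeSumMultilinear_apply _ a).symm)
  exact ⟨φ, fun a => (hφ a).trans (wedgeSumMultilinear_apply _ a)⟩

theorem stmt6 {R M : Type*} [CommRing R] [AddCommGroup M] [Module R M]
    (n k : ℕ) (hn : 0 < n) (hk : 0 < k) (hkeven : Even k) :
    ∃ φ : SymPow R n (SymPow R k M) →ₗ[R] SymPow R k (⋀[R]^n M),
      ∀ a : Fin n → Fin k → M,
        φ (SymPow.prod R fun i : Fin n => SymPow.prod R (a i)) =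
          ∑ σ ∈ Finset.univ.filter
              (fun σ : Fin n → Equiv.Perm (Fin k) => σ ⟨0, hn⟩ = 1),
            SymPow.prod R (fun i : Fin k => wedgeMk R (fun j : Fin n => a j (σ j i))) :=
  stmt6_general n k hn hkeven
end

section
/- Let R be a commutative ring with 1 and let M be a free R-module of rank 3. Then the composite φ_{3,2} ∘ φ_{2,3} : Sym²(⋀³M) → Sym²(⋀³M) equals multiplication by 12, i.e. φ_{3,2} ∘ φ_{2,3} = 12 · id_{Sym²(⋀³M)}. (Note 12 = (2+3−1)!/2.) -/
/-!
Since `b` is a basis of `M` of size three, `⋀³M` is spanned by `e = b₀ ∧ b₁ ∧ b₂`, so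
`Sym²(⋀³M)` is spanned by `e · e` and it suffices to evaluate `φ₂ (φ₁ (e · e))`. Every term of
`φ₂ (φ₁ (e · e))` is a product of two wedges of basis vectors, each of which is `±e` or `0`;
the signed count of these terms over `τ ∈ S₃` and `(σ₂, σ₃) ∈ S₂ × S₂` is `12`, a finite
computation.
-/

open scoped TensorProduct

/-- Half the Vandermonde product `∏_{i<j} (f j - f i)`: the sign of `f` when `f` is a
permutation of `Fin 3`, and `0` otherwise. -/
def finThreeSign (f : Fin 3 → Fin 3) : ℤ :=
  (((f 1 : ℤ) - f 0) * ((f 2 : ℤ) - f 0) * ((f 2 : ℤ) - f 1)) / 2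

theorem Equiv.Perm.sign_eq_finThreeSign (σ : Equiv.Perm (Fin 3)) :
    (Equiv.Perm.sign σ : ℤ) = finThreeSign σ := by
  revert σ; decide

theorem finThreeSign_eq_zero {f : Fin 3 → Fin 3} (hf : ¬ f.Injective) : finThreeSign f = 0 := by
  revert f; decide

namespace AlternatingMap

variable {R M N ι : Type*} [CommRing R] [AddCommGroup M] [Module R M] [AddCommGroup N]
  [Module R N]

theorem map_comp_mem_span_singleton [Finite ι] (F : M [⋀^ι]→ₗ[R] N) (v : ι → M) (f : ι → ι) :
    F (v ∘ f) ∈ R ∙ F v := by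
  classical
  have := Fintype.ofFinite ι
  by_cases hf : f.Injective
  · rw [show v ∘ f = v ∘ Equiv.ofBijective f hf.bijective_of_finite from rfl, F.map_perm]
    exact Submodule.smul_of_tower_mem _ _ (Submodule.mem_span_singleton_self _)
  · rw [F.map_eq_zero_of_not_injective _ fun h => hf h.of_comp]
    exact zero_mem _

theorem map_comp_fin_three (F : M [⋀^Fin 3]→ₗ[R] N) (v : Fin 3 → M)
    (f : Fin 3 → Fin 3) : F (v ∘ f) = finThreeSign f • F v := by
  by_cases hf : f.Injective
  · rw [show v ∘ f = v ∘ Equiv.ofBijective f hf.bijective_of_finite from rfl, F.map_perm,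
      Units.smul_def, Equiv.Perm.sign_eq_finThreeSign]
    rfl
  · rw [finThreeSign_eq_zero hf, zero_smul,
      F.map_eq_zero_of_not_injective _ fun h => hf h.of_comp]

end AlternatingMap

theorem wedgeMk_eq_ιMulti {R M : Type*} [CommRing R] [AddCommGroup M] [Module R M] {n : ℕ}
    (v : Fin n → M) : wedgeMk R v = exteriorPower.ιMulti R n v := rfl

theorem span_wedgeMk_basis {R M : Type*} [CommRing R] [AddCommGroup M] [Module R M] {n : ℕ}
    (b : Module.Basis (Fin n) R M) : R ∙ wedgeMk R ⇑b = ⊤ := by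
  rw [eq_top_iff, ← exteriorPower.ιMulti_span_of_span R n M b.span_eq, Submodule.span_le]
  rintro _ ⟨a, ha, rfl⟩
  obtain ⟨f, rfl⟩ := Set.range_subset_range_iff_exists_comp.mp ha
  exact (exteriorPower.ιMulti R n).map_comp_mem_span_singleton b f

namespace SymPow

variable {R M N : Type*} [CommRing R] [AddCommGroup M] [Module R M] [AddCommGroup N]
  [Module R N] {n : ℕ}

theorem prod_smul (c : Fin n → R) (v : Fin n → M) :
    SymPow.prod R (fun i => c i • v i) = (∏ i, c i) • SymPow.prod R v := by
  rw [SymPow.prod, MultilinearMap.map_smul_univ, map_smul, SymPow.prod]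

theorem linearMap_ext {f g : SymPow R n M →ₗ[R] N}
    (h : ∀ v : Fin n → M, f (SymPow.prod R v) = g (SymPow.prod R v)) : f = g :=
  Submodule.linearMap_qext _ (PiTensorProduct.ext (MultilinearMap.ext h))

theorem linearMap_ext_of_span_singleton_eq_top {e : M} (he : R ∙ e = ⊤)
    {f g : SymPow R n M →ₗ[R] N}
    (h : f (SymPow.prod R fun _ => e) = g (SymPow.prod R fun _ => e)) : f = g := by
  refine linearMap_ext fun v => ?_
  have hv : ∀ i, ∃ c : R, c • e = v i := fun i =>
    Submodule.mem_span_singleton.mp (he ▸ Submodule.mem_top)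
  choose c hc using hv
  simp only [← funext hc, prod_smul, map_smul, h]

end SymPow

/-- The indices of the basis vectors in the `i`-th wedge that `φ₂` produces from the `τ`-term
of `φ₁ (e · e)`, for the pair of permutations `p`. -/
def matchIndex (τ : Equiv.Perm (Fin 3)) (p : Equiv.Perm (Fin 2) × Equiv.Perm (Fin 2))
    (i : Fin 2) : Fin 3 → Fin 3 :=
  ![![0, τ 0] i, ![1, τ 1] (p.1 i), ![2, τ 2] (p.2 i)]

theorem sum_sign_mul_finThreeSign_matchIndex :
    ∑ τ : Equiv.Perm (Fin 3), ∑ p : Equiv.Perm (Fin 2) × Equiv.Perm (Fin 2),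
      (Equiv.Perm.sign τ : ℤ) *
        (finThreeSign (matchIndex τ p 0) * finThreeSign (matchIndex τ p 1)) = 12 := by
  decide

theorem wedgeMk_basis_matchIndex {R M : Type*} [CommRing R] [AddCommGroup M] [Module R M]
    (b : Module.Basis (Fin 3) R M) (τ : Equiv.Perm (Fin 3))
    (p : Equiv.Perm (Fin 2) × Equiv.Perm (Fin 2)) (i : Fin 2) :
    wedgeMk R ![![b 0, b (τ 0)] i, ![b 1, b (τ 1)] (p.1 i), ![b 2, b (τ 2)] (p.2 i)] =
      (finThreeSign (matchIndex τ p i) : R) • wedgeMk R ⇑b := by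
  have h_pair (x y : Fin 3) (k : Fin 2) : ![b x, b y] k = b (![x, y] k) := by
    fin_cases k <;> rfl
  have h_comp : (![![b 0, b (τ 0)] i, ![b 1, b (τ 1)] (p.1 i), ![b 2, b (τ 2)] (p.2 i)] :
      Fin 3 → M) = b ∘ matchIndex τ p i := by
    ext j; fin_cases j <;> exact h_pair _ _ _
  rw [h_comp, wedgeMk_eq_ιMulti, AlternatingMap.map_comp_fin_three]
  exact (Int.cast_smul_eq_zsmul R _ _).symm

theorem comp_apply_prod_wedgeMk_basis {R M : Type*} [CommRing R] [AddCommGroup M] [Module R M]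
    (b : Module.Basis (Fin 3) R M)
    (φ₁ : SymPow R 2 (⋀[R]^3 M) →ₗ[R] SymPow R 3 (SymPow R 2 M))
    (hφ₁ : ∀ a : Fin 2 → Fin 3 → M,
      φ₁ (SymPow.prod R ![wedgeMk R (a 0), wedgeMk R (a 1)]) =
        ∑ τ : Equiv.Perm (Fin 3),
          (Equiv.Perm.sign τ : ℤ) •
            SymPow.prod R (fun i : Fin 3 => SymPow.prod R ![a 0 i, a 1 (τ i)]))
    (φ₂ : SymPow R 3 (SymPow R 2 M) →ₗ[R] SymPow R 2 (⋀[R]^3 M))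
    (hφ₂ : ∀ a : Fin 3 → Fin 2 → M,
      φ₂ (SymPow.prod R fun j : Fin 3 => SymPow.prod R (a j)) =
        ∑ p : Equiv.Perm (Fin 2) × Equiv.Perm (Fin 2),
          SymPow.prod R (fun i : Fin 2 => wedgeMk R ![a 0 i, a 1 (p.1 i), a 2 (p.2 i)])) :
    φ₂ (φ₁ (SymPow.prod R fun _ => wedgeMk R ⇑b)) =
      (12 : ℕ) • SymPow.prod R fun _ => wedgeMk R ⇑b := by
  set E : SymPow R 2 (⋀[R]^3 M) := SymPow.prod R fun _ => wedgeMk R ⇑b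
  have h_term (τ : Equiv.Perm (Fin 3)) :
      φ₂ (SymPow.prod R fun j => SymPow.prod R ![b j, b (τ j)]) =
        ∑ p : Equiv.Perm (Fin 2) × Equiv.Perm (Fin 2),
          ((finThreeSign (matchIndex τ p 0) * finThreeSign (matchIndex τ p 1) : ℤ) : R) • E := by
    rw [hφ₂ fun j => ![b j, b (τ j)]]
    refine Finset.sum_congr rfl fun p _ => ?_
    simp only [wedgeMk_basis_matchIndex, SymPow.prod_smul, Fin.prod_univ_two, Int.cast_mul, E]
  have h_E : SymPow.prod R ![wedgeMk R ⇑b, wedgeMk R ⇑b] = E := by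
    congr 1; ext i; fin_cases i <;> rfl
  calc φ₂ (φ₁ E)
      = ∑ τ : Equiv.Perm (Fin 3), (Equiv.Perm.sign τ : ℤ) •
          φ₂ (SymPow.prod R fun j => SymPow.prod R ![b j, b (τ j)]) := by
        rw [← h_E, hφ₁ fun _ => b, map_sum]
        simp only [map_zsmul]
    _ = ((12 : ℤ) : R) • E := by
        simp only [h_term, ← sum_sign_mul_finThreeSign_matchIndex, Int.cast_sum, Int.cast_mul,
          Finset.sum_smul, Finset.smul_sum, ← Int.cast_smul_eq_zsmul R, smul_smul]
    _ = (12 : ℕ) • E := by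
        rw [Int.cast_smul_eq_zsmul]; norm_cast

theorem stmt10 {R M : Type*} [CommRing R] [AddCommGroup M] [Module R M]
    (b : Module.Basis (Fin 3) R M)
    (φ₁ : SymPow R 2 (⋀[R]^3 M) →ₗ[R] SymPow R 3 (SymPow R 2 M))
    (hφ₁ : ∀ a : Fin 2 → Fin 3 → M,
      φ₁ (SymPow.prod R ![wedgeMk R (a 0), wedgeMk R (a 1)]) =
        ∑ τ : Equiv.Perm (Fin 3),
          (Equiv.Perm.sign τ : ℤ) •
            SymPow.prod R (fun i : Fin 3 => SymPow.prod R ![a 0 i, a 1 (τ i)]))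
    (φ₂ : SymPow R 3 (SymPow R 2 M) →ₗ[R] SymPow R 2 (⋀[R]^3 M))
    (hφ₂ : ∀ a : Fin 3 → Fin 2 → M,
      φ₂ (SymPow.prod R fun j : Fin 3 => SymPow.prod R (a j)) =
        ∑ p : Equiv.Perm (Fin 2) × Equiv.Perm (Fin 2),
          SymPow.prod R (fun i : Fin 2 => wedgeMk R ![a 0 i, a 1 (p.1 i), a 2 (p.2 i)])) :
    φ₂ ∘ₗ φ₁ = (12 : ℕ) • LinearMap.id :=
  SymPow.linearMap_ext_of_span_singleton_eq_top (span_wedgeMk_basis b)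
    (comp_apply_prod_wedgeMk_basis b φ₁ hφ₁ φ₂ hφ₂)
end
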